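/- Let κ ≥ 0 be an integer, let r' ≥ 3 be an odd integer, set r = 2^κ · r', assume r ≥ 40, let n and n₀ be positive integers with n − n₀ ≥ 11 and r < 2^{n₀}, and let m be a positive integer with 2^n/r − 1 < m < 2^n/r + 1. Then 2^κ · (2/(2^n·m)) · ∑_{j=1}^{(r'−1)/2} sin²(π·m·j/2^{n−κ}) / sin²(π·j/2^{n−κ}) + (2^κ − 1)·m/2^n > 0.70. -/

import Mathlib

/-!
Write `E = 2^(n-κ)` and `R = r'`. The condition on `m` says `|m R - E| < R`, and
`E ≥ 2^11 R`. For `1 ≤ j ≤ (R-1)/2` the angle `π m j / E` is within `π j / E` of `π j / R`,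
which is small against `sin (π j / R) ≥ 2 j / R`; with `sin x ≥ x - x³/6` in the numerator and
`sin x ≤ x` in the denominator, the `j`-th term of the sum is at least
`(1 - π/2^12)² E² (1/R - π² j² / (6 R³))²`.
With `R = 2k+1`, the sums of `j²` and `j⁴` turn the resulting lower bound into a quadratic in
`t = k(k+1)/R² ≤ 1/4`, which is at least `3/4 - 1/R`. The second summand is about
`1/R - 1/r ≥ 1/R - 1/40`, so the `1/R` terms cancel and about `3/4 - 1/40` remains.
-/

open Real Finset

theorem sum_Icc_sq (k : ℕ) :
    ∑ j ∈ Icc 1 k, (j : ℝ) ^ 2 = k * (k + 1) * (2 * k + 1) / 6 := by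
  induction k with
  | zero => simp
  | succ k ih =>
    rw [sum_Icc_succ_top (by omega), ih]
    push_cast
    ring

theorem sum_Icc_pow_four (k : ℕ) :
    ∑ j ∈ Icc 1 k, (j : ℝ) ^ 4
      = k * (k + 1) * (2 * k + 1) * (3 * k ^ 2 + 3 * k - 1) / 30 := by
  induction k with
  | zero => simp
  | succ k ih =>
    rw [sum_Icc_succ_top (by omega), ih]
    push_cast
    ring

theorem three_quarters_le_pi_quadratic {t : ℝ} (ht : t ≤ 1 / 4) :
    3 / 4 ≤ 1 - π ^ 2 / 9 * t + π ^ 4 / 540 * (7 * t ^ 2 - t) := by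
  have hπ₁ : 3.14 < π := pi_gt_d2
  have hπ₂ : π < 3.15 := pi_lt_d2
  have hπsq₁ : 9.85 < π ^ 2 := by nlinarith
  have hπsq₂ : π ^ 2 < 9.93 := by nlinarith
  have hπ4 : 97 < π ^ 4 := by nlinarith
  -- the quadratic is decreasing for t ≤ 1/4, so its minimum there is at t = 1/4
  have hdecr :
      0 ≤ (1 / 4 - t) * (π ^ 2 / 9 - 7 * π ^ 4 / 540 * (t - 1 / 4) - 5 * π ^ 4 / 1080) := by
    apply mul_nonneg (by linarith)
    nlinarith
  nlinarith

theorem three_quarters_sub_inv_le_two_mul_sum_sq (k : ℕ) {R : ℝ} (hR : R = 2 * k + 1) :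
    3 / 4 - 1 / R ≤ 2 * R * ∑ j ∈ Icc 1 k, (1 / R - π ^ 2 * j ^ 2 / (6 * R ^ 3)) ^ 2 := by
  have hR₀ : 0 < R := by rw [hR]; positivity
  have hsum : ∑ j ∈ Icc 1 k, (1 / R - π ^ 2 * j ^ 2 / (6 * R ^ 3)) ^ 2
      = k / R ^ 2 - π ^ 2 / (3 * R ^ 4) * ∑ j ∈ Icc 1 k, (j : ℝ) ^ 2
        + π ^ 4 / (36 * R ^ 6) * ∑ j ∈ Icc 1 k, (j : ℝ) ^ 4 := by
    have hterm (j : ℕ) : (1 / R - π ^ 2 * j ^ 2 / (6 * R ^ 3)) ^ 2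
        = 1 / R ^ 2 - π ^ 2 / (3 * R ^ 4) * j ^ 2 + π ^ 4 / (36 * R ^ 6) * j ^ 4 := by
      field_simp
      ring
    simp only [hterm, sum_add_distrib, sum_sub_distrib, ← mul_sum, sum_const, Nat.card_Icc,
      nsmul_eq_mul]
    push_cast
    ring
  set t : ℝ := k * (k + 1) / R ^ 2 with ht
  have ht₁ : t ≤ 1 / 4 := by
    rw [ht, div_le_iff₀ (by positivity), hR]; nlinarith
  have hclosed : 2 * R * ∑ j ∈ Icc 1 k, (1 / R - π ^ 2 * j ^ 2 / (6 * R ^ 3)) ^ 2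
      = 1 - 1 / R - π ^ 2 / 9 * t + π ^ 4 / 540 * (7 * t ^ 2 - t) := by
    rw [hsum, sum_Icc_sq, sum_Icc_pow_four, ht]
    subst hR
    field_simp
    ring
  linarith [three_quarters_le_pi_quadratic ht₁]

section

variable {E R m N j : ℝ}

theorem one_sub_mul_sin_le_sin (hR : 0 < R) (hN : 0 < N) (hRE : N * R ≤ E)
    (hm : |m * R - E| ≤ R) (hj : 0 ≤ j) (hjR : 2 * j ≤ R) :
    (1 - π / (2 * N)) * sin (π * j / R) ≤ sin (π * m * j / E) := by
  have hE : 0 < E := lt_of_lt_of_le (by positivity) hRE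
  have hdist : |π * m * j / E - π * j / R| ≤ π * j / E := by
    have heq : π * m * j / E - π * j / R = π * j / E * ((m * R - E) / R) := by
      field_simp
    rw [heq, abs_mul, abs_of_nonneg (by positivity), abs_div, abs_of_pos hR]
    exact mul_le_of_le_one_right (by positivity) ((div_le_one hR).2 hm)
  have hsin : 2 * j / R ≤ sin (π * j / R) := by
    have h := mul_le_sin (x := π * j / R) (by positivity) (by
      rw [div_le_div_iff₀ hR two_pos]; nlinarith [pi_pos])
    rwa [show 2 / π * (π * j / R) = 2 * j / R by field_simp] at h
  have hsmall : π * j / E ≤ π / (2 * N) * sin (π * j / R) := calc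
    π * j / E ≤ π * j / (N * R) := by gcongr
    _ = π / (2 * N) * (2 * j / R) := by field_simp
    _ ≤ π / (2 * N) * sin (π * j / R) := by gcongr
  have hlip := (abs_le.1 (abs_sin_sub_sin_le (π * m * j / E) (π * j / R))).1
  linarith [hdist.trans hsmall]

theorem sq_le_sin_sq_div_sin_sq (hR : 0 < R) (hN : π ≤ 2 * N) (hRE : N * R ≤ E)
    (hm : |m * R - E| ≤ R) (hj : 0 < j) (hjR : 2 * j ≤ R) :
    ((1 - π / (2 * N)) * E * (1 / R - π ^ 2 * j ^ 2 / (6 * R ^ 3))) ^ 2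
      ≤ sin (π * m * j / E) ^ 2 / sin (π * j / E) ^ 2 := by
  have hπ := pi_pos
  have hN₀ : 0 < N := by linarith
  have hE : 0 < E := lt_of_lt_of_le (by positivity) hRE
  set b := π * j / R with hb
  have hb₀ : 0 ≤ b := by positivity
  have hb₁ : b ≤ π / 2 := by rw [hb, div_le_div_iff₀ hR two_pos]; nlinarith
  have hc : 0 ≤ 1 - π / (2 * N) := by rw [sub_nonneg, div_le_one (by positivity)]; exact hN
  have hcubic : 0 ≤ b - b ^ 3 / 6 := by
    have : b ^ 2 ≤ 6 := by nlinarith [pi_lt_d2]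
    nlinarith
  have hnum : ((1 - π / (2 * N)) * (b - b ^ 3 / 6)) ^ 2 ≤ sin (π * m * j / E) ^ 2 := by
    refine pow_le_pow_left₀ (mul_nonneg hc hcubic) ?_ 2
    calc (1 - π / (2 * N)) * (b - b ^ 3 / 6) ≤ (1 - π / (2 * N)) * sin b :=
          mul_le_mul_of_nonneg_left (sin_ge_sub_cube hb₀) hc
      _ ≤ sin (π * m * j / E) := one_sub_mul_sin_le_sin hR hN₀ hRE hm hj.le hjR
  have hden : 0 < sin (π * j / E) := by
    apply sin_pos_of_pos_of_lt_pi (by positivity)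
    rw [div_lt_iff₀ hE]
    have hjE : j < E := by nlinarith [pi_gt_three]
    exact mul_lt_mul_of_pos_left hjE hπ
  calc ((1 - π / (2 * N)) * E * (1 / R - π ^ 2 * j ^ 2 / (6 * R ^ 3))) ^ 2
      = ((1 - π / (2 * N)) * (b - b ^ 3 / 6)) ^ 2 / (π * j / E) ^ 2 := by
        rw [hb]; field_simp
    _ ≤ sin (π * m * j / E) ^ 2 / sin (π * j / E) ^ 2 := by
        gcongr
        exact sin_le (by positivity)

theorem two_div_mul_sum_sin_sq_div_sin_sq_ge (k : ℕ) (hR : R = 2 * k + 1) (hN : π ≤ 2 * N)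
    (hRE : N * R ≤ E) (hm : |m * R - E| ≤ R) :
    (1 - π / (2 * N)) ^ 2 * (N / (N + 1)) * (3 / 4 - 1 / R)
      ≤ 2 / (E * m) * ∑ j ∈ Icc 1 k, sin (π * m * j / E) ^ 2 / sin (π * j / E) ^ 2 := by
  have hR₀ : 0 < R := by rw [hR]; positivity
  have hN₁ : 1 < N := by linarith [pi_gt_three]
  have hE : 0 < E := lt_of_lt_of_le (by positivity) hRE
  have hmR := abs_le.1 hm
  have hm₀ : 0 < m := pos_of_mul_pos_left (by nlinarith) hR₀.le
  set S := ∑ j ∈ Icc 1 k, (1 / R - π ^ 2 * j ^ 2 / (6 * R ^ 3)) ^ 2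
  have hS : 0 ≤ S := sum_nonneg fun _ _ ↦ sq_nonneg _
  have hterms : (1 - π / (2 * N)) ^ 2 * E ^ 2 * S
      ≤ ∑ j ∈ Icc 1 k, sin (π * m * j / E) ^ 2 / sin (π * j / E) ^ 2 := by
    rw [mul_sum]
    refine sum_le_sum fun j hj ↦ ?_
    have hj := mem_Icc.1 hj
    have hj₁ : (1 : ℝ) ≤ j := by exact_mod_cast hj.1
    have hjk : (j : ℝ) ≤ k := by exact_mod_cast hj.2
    rw [← mul_pow, ← mul_pow]
    exact sq_le_sin_sq_div_sin_sq hR₀ hN hRE hm (by linarith) (by linarith)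
  -- `m R ≤ E + R ≤ (1 + 1/N) E`
  have hEm : R * (N / (N + 1)) ≤ E / m := by
    rw [le_div_iff₀ hm₀, show R * (N / (N + 1)) * m = N * (m * R) / (N + 1) by ring,
      div_le_iff₀ (by linarith)]
    nlinarith
  calc (1 - π / (2 * N)) ^ 2 * (N / (N + 1)) * (3 / 4 - 1 / R)
      ≤ (1 - π / (2 * N)) ^ 2 * (N / (N + 1)) * (2 * R * S) := by
        gcongr
        exact three_quarters_sub_inv_le_two_mul_sum_sq k hR
    _ = 2 * (1 - π / (2 * N)) ^ 2 * S * (R * (N / (N + 1))) := by ring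
    _ ≤ 2 * (1 - π / (2 * N)) ^ 2 * S * (E / m) := by gcongr
    _ = 2 / (E * m) * ((1 - π / (2 * N)) ^ 2 * E ^ 2 * S) := by field_simp
    _ ≤ _ := by gcongr

theorem one_sub_inv_mul_le_sub_one_mul_div {q : ℝ} (hq : 1 ≤ q) (hR : 0 < R) (hN : 1 ≤ N)
    (hRE : N * R ≤ E) (hm : |m * R - E| ≤ R) (h40 : 40 ≤ q * R) :
    (1 - 1 / N) * (1 / R - 1 / 40) ≤ (q - 1) * m / (q * E) := by
  have hE : 0 < E := lt_of_lt_of_le (by positivity) hRE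
  have hmE : (1 - 1 / N) / R ≤ m / E := by
    rw [div_le_div_iff₀ hR hE]
    have hRE' : R ≤ E / N := by rw [le_div_iff₀ (by linarith)]; linarith
    calc (1 - 1 / N) * E = E - E / N := by ring
      _ ≤ E - R := by linarith
      _ ≤ m * R := by linarith [(abs_le.1 hm).1]
  calc (1 - 1 / N) * (1 / R - 1 / 40) ≤ (1 - 1 / N) * (1 / R - 1 / (q * R)) := by
        gcongr
        exact sub_nonneg.2 (div_le_one_of_le₀ hN (by linarith))
    _ = (1 - 1 / q) * ((1 - 1 / N) / R) := by field_simp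
    _ ≤ (1 - 1 / q) * (m / E) := by
        gcongr
        exact sub_nonneg.2 (div_le_one_of_le₀ hq (by linarith))
    _ = (q - 1) * m / (q * E) := by field_simp

end

theorem seventy_percent_lt {u : ℝ} (hu : 0 ≤ u) :
    0.70 < (1 - π / (2 * 2 ^ 11)) ^ 2 * (2 ^ 11 / (2 ^ 11 + 1)) * (3 / 4 - u)
      + (1 - 1 / 2 ^ 11) * (u - 1 / 40) := by
  have hπ₁ : 3.14 < π := pi_gt_d2
  have hπ₂ : π < 3.15 := pi_lt_d2
  have hc : 0.998 ≤ (1 - π / (2 * 2 ^ 11)) ^ 2 := by nlinarith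
  have hc' : (1 - π / (2 * 2 ^ 11)) ^ 2 ≤ 0.999 := by nlinarith
  generalize (1 - π / (2 * 2 ^ 11)) ^ 2 = c at hc hc'
  have hslope : 0 ≤ 1 - 1 / 2 ^ 11 - c * (2 ^ 11 / (2 ^ 11 + 1)) := by linarith
  nlinarith [mul_nonneg hu hslope]

theorem le_two_pow_sub_of_two_pow_mul_le {κ a n : ℕ} (ha : 0 < a) (h : 2 ^ κ * a ≤ 2 ^ n) :
    κ ≤ n ∧ a ≤ 2 ^ (n - κ) := by
  have hκ : κ ≤ n :=
    (Nat.pow_le_pow_iff_right one_lt_two).1 ((Nat.le_mul_of_pos_right _ ha).trans h)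
  refine ⟨hκ, Nat.le_of_mul_le_mul_left ?_ (by positivity : 0 < 2 ^ κ)⟩
  rwa [← pow_add, Nat.add_sub_cancel' hκ]

theorem stmt_8_general (κ r' n n₀ m : ℕ) (hodd : Odd r')
    (r : ℕ) (hr : r = 2 ^ κ * r') (hr40 : 40 ≤ r)
    (hnn₀ : 11 ≤ n - n₀)
    (hr2 : r < 2 ^ n₀)
    (hm1 : (2 : ℝ) ^ n / r - 1 < m) (hm2 : (m : ℝ) < 2 ^ n / r + 1) :
    (2 : ℝ) ^ κ * (2 / ((2 : ℝ) ^ n * m)) *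
        ∑ j ∈ Finset.Icc 1 ((r' - 1) / 2),
          Real.sin (π * m * j / (2 : ℝ) ^ ((n : ℤ) - κ)) ^ 2 /
            Real.sin (π * j / (2 : ℝ) ^ ((n : ℤ) - κ)) ^ 2
      + ((2 : ℝ) ^ κ - 1) * m / 2 ^ n
      > 0.70 := by
  obtain ⟨k, rfl⟩ := hodd
  obtain ⟨hκn, hpow⟩ := le_two_pow_sub_of_two_pow_mul_le (a := 2 ^ 11 * (2 * k + 1))
    (by positivity) <| calc
      2 ^ κ * (2 ^ 11 * (2 * k + 1)) = 2 ^ 11 * r := by rw [hr]; ring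
      _ ≤ 2 ^ (11 + n₀) := by rw [pow_add]; omega
      _ ≤ 2 ^ n := Nat.pow_le_pow_right two_pos (by omega)
  have hRE : (2 : ℝ) ^ 11 * (2 * k + 1) ≤ 2 ^ (n - κ) := by exact_mod_cast hpow
  set E : ℝ := 2 ^ (n - κ)
  have h2n : (2 : ℝ) ^ n = 2 ^ κ * E := by rw [← pow_add, Nat.add_sub_cancel' hκn]
  have hm : |m * (2 * k + 1) - E| ≤ 2 * k + 1 := by
    have hR : (0 : ℝ) < 2 * k + 1 := by positivity
    have hdiv : (2 : ℝ) ^ n / r = E / (2 * k + 1) := by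
      rw [h2n, hr]; push_cast; exact mul_div_mul_left _ _ (by positivity)
    rw [hdiv] at hm1 hm2
    have hER := div_mul_cancel₀ E hR.ne'
    rw [abs_le]
    constructor <;> nlinarith
  have hfirst := two_div_mul_sum_sin_sq_div_sin_sq_ge k rfl (N := 2 ^ 11)
    (by linarith [pi_lt_d2]) hRE hm
  have hsecond := one_sub_inv_mul_le_sub_one_mul_div (q := 2 ^ κ) (one_le_pow₀ one_le_two)
    (by positivity) (by norm_num) hRE hm (by exact_mod_cast hr ▸ hr40)
  rw [show (2 * k + 1 - 1) / 2 = k by omega, ← Nat.cast_sub hκn, zpow_natCast, h2n,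
    show (2 : ℝ) ^ κ * (2 / (2 ^ κ * E * m)) = 2 / (E * m) by field_simp]
  linarith [seventy_percent_lt (u := 1 / (2 * k + 1)) (by positivity)]

theorem stmt_8 (κ r' n n₀ m : ℕ) (hr'3 : 3 ≤ r') (hodd : Odd r')
    (r : ℕ) (hr : r = 2 ^ κ * r') (hr40 : 40 ≤ r)
    (hn₀ : 0 < n₀) (hn : 0 < n) (hnn₀ : 11 ≤ n - n₀)
    (hr2 : r < 2 ^ n₀) (hm : 0 < m)
    (hm1 : (2 : ℝ) ^ n / r - 1 < m) (hm2 : (m : ℝ) < 2 ^ n / r + 1) :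
    (2 : ℝ) ^ κ * (2 / ((2 : ℝ) ^ n * m)) *
        ∑ j ∈ Finset.Icc 1 ((r' - 1) / 2),
          Real.sin (π * m * j / (2 : ℝ) ^ ((n : ℤ) - κ)) ^ 2 /
            Real.sin (π * j / (2 : ℝ) ^ ((n : ℤ) - κ)) ^ 2
      + ((2 : ℝ) ^ κ - 1) * m / 2 ^ n
      > 0.70 :=
  stmt_8_general κ r' n n₀ m hodd r hr hr40 hnn₀ hr2 hm1 hm2
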